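/- The price of stability of every n-player Shapley cost sharing game with nondecreasing set-dependent cost functions is at most n·H_n: there exists a pure Nash equilibrium P such that C(P) ≤ n·H_n · C(Q) for every strategy vector Q, where H_n = Σ_{l=1}^{n} 1/l. -/

import Mathlib

open Finset

def preSet {N : Type*} [DecidableEq N] (S : Finset N)
    (π : {x // x ∈ S} ≃ Fin S.card) (i : {x // x ∈ S}) : Finset N :=
  (S.attach.filter (fun j => π j < π i)).image Subtype.val

noncomputable def shapley {N : Type*} [DecidableEq N]
    (C : Finset N → ℝ) (S : Finset N) (i : N) : ℝ :=
  if hi : i ∈ S then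
    (1 / (Nat.factorial S.card : ℝ)) *
      ∑ π : {x // x ∈ S} ≃ Fin S.card,
        (C (preSet S π ⟨i, hi⟩ ∪ {i}) - C (preSet S π ⟨i, hi⟩))
  else 0

/-- `users P r = P^r = {i : r ∈ P_i}`, the set of players using resource `r`. -/
def users {n : ℕ} {R : Type*} [DecidableEq R]
    (P : Fin n → Finset R) (r : R) : Finset (Fin n) :=
  Finset.univ.filter (fun i => r ∈ P i)

/-- The private cost of player `i` under Shapley cost sharing:
`C_i(P) = Σ_{r ∈ P_i} φ_i(C^r, P^r)`. -/
noncomputable def privCost {n : ℕ} {R : Type*} [DecidableEq R]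
    (Cr : R → Finset (Fin n) → ℝ) (P : Fin n → Finset R) (i : Fin n) : ℝ :=
  ∑ r ∈ P i, shapley (Cr r) (users P r) i

/-- The social cost `C(P) = Σ_{r ∈ R} C^r(P^r)`. -/
noncomputable def socCost {n : ℕ} {R : Type*} [Fintype R] [DecidableEq R]
    (Cr : R → Finset (Fin n) → ℝ) (P : Fin n → Finset R) : ℝ :=
  ∑ r : R, Cr r (users P r)

/-- The Shapley potential
`Φ(P) = Σ_{r ∈ R} Σ_{∅ ≠ T ⊆ P^r} ((|P^r|-|T|)!(|T|-1)!/|P^r|!) · C^r(T)`. -/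
noncomputable def pot {n : ℕ} {R : Type*} [Fintype R] [DecidableEq R]
    (Cr : R → Finset (Fin n) → ℝ) (P : Fin n → Finset R) : ℝ :=
  ∑ r : R, ∑ T ∈ (users P r).powerset.filter (fun T => T.Nonempty),
    ((Nat.factorial ((users P r).card - T.card) : ℝ) *
        (Nat.factorial (T.card - 1) : ℝ) / (Nat.factorial (users P r).card : ℝ)) *
      Cr r T

/-- `P` is a pure Nash equilibrium of the Shapley cost sharing game. -/
def isPNE {n : ℕ} {R : Type*} [DecidableEq R]
    (Strat : Fin n → Set (Finset R)) (Cr : R → Finset (Fin n) → ℝ)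
    (P : Fin n → Finset R) : Prop :=
  (∀ i, P i ∈ Strat i) ∧
    ∀ i, ∀ Q ∈ Strat i, privCost Cr P i ≤ privCost Cr (Function.update P i Q) i

/-- `H_k`, the `k`-th harmonicNum number. -/
noncomputable def harmonicNum (k : ℕ) : ℝ := ∑ l ∈ Finset.Icc 1 k, (1 / (l : ℝ))

/-!
Shapley cost sharing is an exact potential game. Give each resource the Hart–Mas-Colell potential
`Φ(S) = ∑_{∅ ≠ T ⊆ S} (|S|-|T|)! (|T|-1)! / |S|! · C(T)`. Counting the orderings of `S` in which
the predecessors of `i` form a given set `A` (there are `|A|! (|S|-1-|A|)!`) puts the Shapley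
value in subset form, and comparing coefficients gives `Φ(S) - Φ(S ∖ {i}) = φ_i(C, S)`. Hence a
unilateral deviation changes `∑_r Φ(P^r)` by exactly the deviator's change of cost, and a
strategy profile minimising it is a pure Nash equilibrium.

The weights of `Φ(S)` sum to `H_|S|` and the weight of `T = S` is `1 / |S|`, so for nonnegative
nondecreasing `C` we get `C(S) / n ≤ Φ(S) ≤ H_n C(S)`, and for the minimiser `P` and any profile
`Q`: `C(P) ≤ n Φ(P) ≤ n Φ(Q) ≤ n H_n C(Q)`.
-/

open scoped Nat

section LabelPreservingEquiv
variable {α β γ : Type*} [Fintype α] [Fintype β]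

theorem card_equiv_comp_eq [DecidableEq α] [DecidableEq β] [Fintype γ] [DecidableEq γ]
    (f : α → γ) (g : β → γ)
    (hfg : ∀ c, Fintype.card {a // f a = c} = Fintype.card {b // g b = c}) :
    Fintype.card {e : α ≃ β // g ∘ e = f} = ∏ c, (Fintype.card {a // f a = c})! := by
  set e₀ : α ≃ β := Equiv.ofFiberEquiv fun c => Fintype.equivOfCardEq (hfg c)
  have he₀ : g ∘ e₀ = f := funext (Equiv.ofFiberEquiv_map _)
  rw [← DomMulAct.stabilizer_card f]
  refine Fintype.card_congr ((Equiv.equivCongr (Equiv.refl α) e₀).subtypeEquiv fun σ => ?_).symm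
  rw [← he₀]
  rfl

theorem card_fiber_lt_add_card_fiber_eq_add_card_fiber_gt (f : α → Ordering) :
    Fintype.card {a // f a = .lt} + Fintype.card {a // f a = .eq} +
      Fintype.card {a // f a = .gt} = Fintype.card α := by
  classical
  simp only [Fintype.card_subtype]
  have := card_eq_sum_card_fiberwise (f := f) (s := univ) (t := univ) (by simp)
  rw [show (univ : Finset Ordering) = {.lt, .eq, .gt} from rfl] at this
  simp only [card_univ] at this
  simpa [add_assoc] using this.symm

theorem Fin.card_compare_lt {s a : ℕ} (ha : a ≤ s) :
    Fintype.card {y : Fin s // compare (y : ℕ) a = .lt} = a := by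
  simp only [compare_lt_iff_lt, Fintype.card_subtype, Fin.card_filter_val_lt]
  exact min_eq_right ha

theorem Fin.card_compare_eq {s a : ℕ} (ha : a < s) :
    Fintype.card {y : Fin s // compare (y : ℕ) a = .eq} = 1 := by
  rw [← Fintype.card_subtype_eq (⟨a, ha⟩ : Fin s)]
  exact Fintype.card_congr (Equiv.subtypeEquivRight fun y => by simp [Fin.ext_iff])

end LabelPreservingEquiv

section Predecessors
variable {N : Type*} [DecidableEq N] {S A : Finset N} {i : N}

/-- The position of `x` relative to `i` in an ordering in which `A` is the set of
predecessors of `i`. -/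
def predLabel (A : Finset N) (i x : N) : Ordering :=
  if x ∈ A then .lt else if x = i then .eq else .gt

theorem card_predLabel_lt (hA : A ⊆ S) :
    Fintype.card {x : {x // x ∈ S} // predLabel A i x = .lt} = #A := by
  rw [← Fintype.card_coe A]
  refine Fintype.card_congr ((Equiv.subtypeEquivRight fun x => ?_).trans
    (Equiv.subtypeSubtypeEquivSubtype fun hx => hA hx))
  unfold predLabel
  split_ifs <;> simp_all

theorem card_predLabel_eq (hi : i ∈ S) (hiA : i ∉ A) :
    Fintype.card {x : {x // x ∈ S} // predLabel A i x = .eq} = 1 := by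
  rw [← Fintype.card_subtype_eq (⟨i, hi⟩ : {x // x ∈ S})]
  refine Fintype.card_congr (Equiv.subtypeEquivRight fun x => ?_)
  simp only [predLabel, Subtype.ext_iff]
  split_ifs with hxA hxi
  · simpa using fun hxi : x.1 = i => hiA (hxi ▸ hxA)
  · simpa using hxi
  · simpa using hxi

theorem mem_preSet (π : {x // x ∈ S} ≃ Fin #S) (i : {x // x ∈ S}) (j : N) :
    j ∈ preSet S π i ↔ ∃ h : j ∈ S, π ⟨j, h⟩ < π i := by
  simp [preSet]

theorem card_preSet (π : {x // x ∈ S} ≃ Fin #S) (i : {x // x ∈ S}) : #(preSet S π i) = π i := by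
  rw [preSet, card_image_of_injective _ Subtype.val_injective, ← univ_eq_attach,
    ← Fin.card_Iio, ← card_map π.symm.toEmbedding]
  congr 1
  ext j
  simp

theorem preSet_subset_erase (π : {x // x ∈ S} ≃ Fin #S) (hi : i ∈ S) :
    preSet S π ⟨i, hi⟩ ⊆ S.erase i := by
  intro j hj
  obtain ⟨hjS, hlt⟩ := (mem_preSet π _ j).1 hj
  refine mem_erase.2 ⟨?_, hjS⟩
  rintro rfl
  exact lt_irrefl _ hlt

theorem preSet_eq_iff (π : {x // x ∈ S} ≃ Fin #S) (hi : i ∈ S) (hA : A ⊆ S.erase i) :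
    preSet S π ⟨i, hi⟩ = A ↔
      (fun y : Fin #S => compare (y : ℕ) #A) ∘ π = fun x : {x // x ∈ S} => predLabel A i x := by
  have hiA : i ∉ A := fun h => (mem_erase.1 (hA h)).1 rfl
  constructor
  · rintro rfl
    funext x
    have hx := mem_preSet π ⟨i, hi⟩ x.1
    simp only [Function.comp_apply, card_preSet, predLabel]
    split_ifs with h1 h2
    · exact compare_lt_iff_lt.2 (Fin.lt_def.1 (hx.1 h1).2)
    · rw [show x = ⟨i, hi⟩ from Subtype.ext h2]
      exact compare_eq_iff_eq.2 rfl
    · refine compare_gt_iff_gt.2 (lt_of_le_of_ne (not_lt.1 fun h => h1 (hx.2 ⟨x.2, h⟩)) ?_)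
      exact fun h => h2 (congrArg Subtype.val (π.injective (Fin.ext h)).symm)
  · intro h
    have hπi : (π ⟨i, hi⟩ : ℕ) = #A := by
      simpa [predLabel, hiA] using congrFun h ⟨i, hi⟩
    ext j
    rw [mem_preSet]
    constructor
    · rintro ⟨hj, hlt⟩
      have := congrFun h ⟨j, hj⟩
      simp only [Function.comp_apply, ← hπi, compare_lt_iff_lt.2 (Fin.lt_def.1 hlt),
        predLabel] at this
      by_contra hjA
      rw [if_neg hjA] at this
      split_ifs at this
    · intro hj
      have := congrFun h ⟨j, (mem_erase.1 (hA hj)).2⟩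
      simp only [Function.comp_apply, predLabel, hj, if_true, compare_lt_iff_lt, ← hπi] at this
      exact ⟨_, Fin.lt_def.2 this⟩

theorem card_filter_preSet_eq (hi : i ∈ S) (hA : A ⊆ S.erase i) :
    #{π : {x // x ∈ S} ≃ Fin #S | preSet S π ⟨i, hi⟩ = A} = (#A)! * (#S - 1 - #A)! := by
  have hiA : i ∉ A := fun h => (mem_erase.1 (hA h)).1 rfl
  have hAS : #A < #S := (card_le_card hA).trans_lt (card_erase_lt_of_mem hi)
  have hf_lt := card_predLabel_lt (i := i) (hA.trans (erase_subset i S))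
  have hf_eq := card_predLabel_eq hi hiA
  have hg_lt := Fin.card_compare_lt hAS.le
  have hg_eq := Fin.card_compare_eq hAS
  have hf := card_fiber_lt_add_card_fiber_eq_add_card_fiber_gt fun x : {x // x ∈ S} => predLabel A i x
  have hg := card_fiber_lt_add_card_fiber_eq_add_card_fiber_gt fun y : Fin #S => compare (y : ℕ) #A
  simp only [Fintype.card_coe, Fintype.card_fin] at hf hg
  rw [← Fintype.card_subtype, Fintype.card_congr (Equiv.subtypeEquivRight fun π =>
    preSet_eq_iff π hi hA), card_equiv_comp_eq _ _ fun c => by cases c <;> omega,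
    show (univ : Finset Ordering) = {.lt, .eq, .gt} from rfl, prod_insert (by decide),
    prod_insert (by decide), prod_singleton, hf_lt, hf_eq, Nat.factorial_one, one_mul]
  congr 2
  omega

end Predecessors

noncomputable def shapleyWeight (s a : ℕ) : ℝ := (a ! : ℝ) * ((s - 1 - a)! : ℝ) / (s ! : ℝ)

theorem shapley_eq_sum_powerset {N : Type*} [DecidableEq N] (C : Finset N → ℝ) {S : Finset N}
    {i : N} (hi : i ∈ S) :
    shapley C S i = ∑ A ∈ (S.erase i).powerset, shapleyWeight #S #A * (C (insert i A) - C A) := by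
  rw [shapley, dif_pos hi, ← sum_fiberwise_of_maps_to (g := fun π => preSet S π ⟨i, hi⟩)
    (t := (S.erase i).powerset) fun π _ => mem_powerset.2 (preSet_subset_erase π hi), mul_sum]
  refine sum_congr rfl fun A hA => ?_
  rw [sum_congr rfl fun π hπ => by rw [(mem_filter.1 hπ).2], sum_const,
    card_filter_preSet_eq hi (mem_powerset.1 hA), nsmul_eq_mul, union_singleton, shapleyWeight]
  push_cast
  ring

noncomputable def potentialWeight (s t : ℕ) : ℝ := ((s - t)! : ℝ) * ((t - 1)! : ℝ) / (s ! : ℝ)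

theorem potentialWeight_nonneg (s t : ℕ) : 0 ≤ potentialWeight s t := by
  unfold potentialWeight
  positivity

theorem potentialWeight_add_one (s a : ℕ) : potentialWeight s (a + 1) = shapleyWeight s a := by
  rw [potentialWeight, shapleyWeight, Nat.add_sub_cancel, Nat.sub_sub, add_comm 1 a, mul_comm]

theorem potentialWeight_sub_potentialWeight_pred {s t : ℕ} (ht : 1 ≤ t) (hts : t < s) :
    potentialWeight s t - potentialWeight (s - 1) t = -shapleyWeight s t := by
  obtain ⟨u, rfl⟩ : ∃ u, t = u + 1 := ⟨t - 1, by omega⟩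
  obtain ⟨v, rfl⟩ : ∃ v, s = u + v + 2 := ⟨s - u - 2, by omega⟩
  simp only [potentialWeight, shapleyWeight, show u + v + 2 - (u + 1) = v + 1 by omega,
    show u + v + 2 - 1 = u + v + 1 by omega, show u + v + 1 - (u + 1) = v by omega,
    Nat.add_sub_cancel, Nat.factorial_succ (u + v + 1), Nat.factorial_succ v,
    Nat.factorial_succ u]
  push_cast
  field_simp
  ring

theorem choose_mul_potentialWeight {s t : ℕ} (ht : 1 ≤ t) (hts : t ≤ s) :
    (s.choose t : ℝ) * potentialWeight s t = 1 / t := by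
  obtain ⟨u, rfl⟩ : ∃ u, t = u + 1 := ⟨t - 1, by omega⟩
  have key : (s.choose (u + 1) * (u + 1)! * (s - (u + 1))! : ℝ) = s ! := by
    exact_mod_cast Nat.choose_mul_factorial_mul_factorial hts
  rw [Nat.factorial_succ] at key
  rw [potentialWeight, Nat.add_sub_cancel]
  push_cast at key ⊢
  field_simp
  linarith

theorem harmonicNum_eq_sum_range (s : ℕ) : harmonicNum s = ∑ t ∈ range (s + 1), 1 / (t : ℝ) := by
  refine sum_subset (fun t ht => ?_) (fun t ht hnot => ?_)
  · simp only [mem_Icc, mem_range] at ht ⊢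
    omega
  · have : t = 0 := by
      simp only [mem_Icc, mem_range] at ht hnot
      omega
    simp [this]

theorem harmonicNum_mono : Monotone harmonicNum := fun _ _ h =>
  sum_le_sum_of_subset_of_nonneg (Icc_subset_Icc_right h) fun _ _ _ => by positivity

theorem sum_potentialWeight {N : Type*} (S : Finset N) :
    ∑ T ∈ S.powerset with T.Nonempty, potentialWeight #S #T = harmonicNum #S := by
  simp only [sum_filter, ← card_pos]
  rw [sum_powerset_apply_card (fun t => if 0 < t then potentialWeight #S t else 0),
    harmonicNum_eq_sum_range]
  refine sum_congr rfl fun t ht => ?_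
  rcases Nat.eq_zero_or_pos t with rfl | ht0
  · simp
  · rw [if_pos ht0, nsmul_eq_mul,
      choose_mul_potentialWeight ht0 (Nat.lt_succ_iff.1 (mem_range.1 ht))]

section Potential
variable {N : Type*} {C : Finset N → ℝ}

noncomputable def shapleyPotential (C : Finset N → ℝ) (S : Finset N) : ℝ :=
  ∑ T ∈ S.powerset with T.Nonempty, potentialWeight #S #T * C T

theorem shapleyPotential_nonneg (hC : ∀ T, 0 ≤ C T) (S : Finset N) : 0 ≤ shapleyPotential C S :=
  sum_nonneg fun T _ => mul_nonneg (potentialWeight_nonneg _ _) (hC T)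

theorem shapleyPotential_eq_sum_powerset (hC0 : C ∅ = 0) (S : Finset N) :
    shapleyPotential C S = ∑ T ∈ S.powerset, potentialWeight #S #T * C T := by
  rw [shapleyPotential, sum_filter]
  refine sum_congr rfl fun T _ => ?_
  split_ifs with hT
  · rfl
  · rw [not_nonempty_iff_eq_empty.1 hT, hC0, mul_zero]

theorem shapleyPotential_sub_erase [DecidableEq N] (hC0 : C ∅ = 0) (S : Finset N) (i : N) :
    shapleyPotential C S - shapleyPotential C (S.erase i) = shapley C S i := by
  by_cases hi : i ∈ S
  swap
  · rw [erase_eq_of_notMem hi, sub_self, shapley, dif_neg hi]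
  have hS : S.powerset = (insert i (S.erase i)).powerset := by rw [insert_erase hi]
  have step : ∀ A ∈ (S.erase i).powerset,
      potentialWeight #S #A * C A - potentialWeight #(S.erase i) #A * C A +
        potentialWeight #S #(insert i A) * C (insert i A) =
      shapleyWeight #S #A * (C (insert i A) - C A) := by
    intro A hA
    have hAS := mem_powerset.1 hA
    rw [card_insert_of_notMem fun h => (mem_erase.1 (hAS h)).1 rfl, potentialWeight_add_one,
      card_erase_of_mem hi]
    rcases A.eq_empty_or_nonempty with rfl | hA0
    · rw [hC0]
      ring
    · have hlt : #A < #S := (card_le_card hAS).trans_lt (card_erase_lt_of_mem hi)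
      linear_combination C A * potentialWeight_sub_potentialWeight_pred (card_pos.2 hA0) hlt
  rw [shapleyPotential_eq_sum_powerset hC0, shapleyPotential_eq_sum_powerset hC0,
    shapley_eq_sum_powerset C hi, hS, sum_powerset_insert (notMem_erase i S), add_sub_right_comm,
    ← sum_sub_distrib, ← sum_add_distrib]
  exact sum_congr rfl step

theorem apply_le_card_mul_shapleyPotential (hC0 : C ∅ = 0) (hC : ∀ T, 0 ≤ C T) (S : Finset N) :
    C S ≤ #S * shapleyPotential C S := by
  rcases S.eq_empty_or_nonempty with rfl | hS
  · simp [hC0]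
  have hw : potentialWeight #S #S = 1 / #S := by
    simpa using choose_mul_potentialWeight hS.card_pos le_rfl
  have hs : (#S : ℝ) ≠ 0 := Nat.cast_ne_zero.2 hS.card_pos.ne'
  calc C S = #S * (potentialWeight #S #S * C S) := by rw [hw]; field_simp
    _ ≤ #S * shapleyPotential C S := by
      gcongr
      exact single_le_sum (f := fun T => potentialWeight #S #T * C T)
        (fun T _ => mul_nonneg (potentialWeight_nonneg _ _) (hC T))
        (mem_filter.2 ⟨mem_powerset_self S, hS⟩)

theorem shapleyPotential_le_harmonicNum_mul (hC : Monotone C) (S : Finset N) :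
    shapleyPotential C S ≤ harmonicNum #S * C S :=
  calc shapleyPotential C S ≤ ∑ T ∈ S.powerset with T.Nonempty, potentialWeight #S #T * C S :=
        sum_le_sum fun T hT => mul_le_mul_of_nonneg_left
          (hC (mem_powerset.1 (mem_filter.1 hT).1)) (potentialWeight_nonneg _ _)
    _ = harmonicNum #S * C S := by rw [← sum_mul, sum_potentialWeight]

end Potential

section Game
variable {n : ℕ} {R : Type*} [DecidableEq R]

theorem mem_users {P : Fin n → Finset R} {r : R} {i : Fin n} : i ∈ users P r ↔ r ∈ P i := by
  simp [users]

theorem card_users_le (P : Fin n → Finset R) (r : R) : #(users P r) ≤ n :=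
  (card_le_univ _).trans_eq (Fintype.card_fin n)

theorem erase_users_update (P : Fin n → Finset R) (i : Fin n) (Q : Finset R) (r : R) :
    (users (Function.update P i Q) r).erase i = (users P r).erase i := by
  ext j
  by_cases hj : j = i
  · simp [hj]
  · simp [hj, mem_users]

variable [Fintype R] (Cr : R → Finset (Fin n) → ℝ)

theorem pot_eq_sum_shapleyPotential (P : Fin n → Finset R) :
    pot Cr P = ∑ r, shapleyPotential (Cr r) (users P r) := rfl

theorem privCost_eq_sum (P : Fin n → Finset R) (i : Fin n) :
    privCost Cr P i = ∑ r, shapley (Cr r) (users P r) i :=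
  sum_subset (subset_univ _) fun _ _ hr => by rw [shapley, dif_neg (mt mem_users.1 hr)]

theorem pot_sub_pot_update (hC0 : ∀ r, Cr r ∅ = 0) (P : Fin n → Finset R) (i : Fin n)
    (Q : Finset R) :
    pot Cr P - pot Cr (Function.update P i Q) =
      privCost Cr P i - privCost Cr (Function.update P i Q) i := by
  simp only [pot_eq_sum_shapleyPotential, privCost_eq_sum, ← sum_sub_distrib]
  refine sum_congr rfl fun r _ => ?_
  rw [← shapleyPotential_sub_erase (hC0 r), ← shapleyPotential_sub_erase (hC0 r),
    erase_users_update]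
  ring

theorem isPNE_of_pot_le (Strat : Fin n → Set (Finset R)) (hC0 : ∀ r, Cr r ∅ = 0)
    {P : Fin n → Finset R} (hP : P ∈ Set.univ.pi Strat)
    (hmin : ∀ Q ∈ Set.univ.pi Strat, pot Cr P ≤ pot Cr Q) : isPNE Strat Cr P := by
  refine ⟨fun i => hP i (Set.mem_univ i), fun i Q hQ => ?_⟩
  have := hmin _ ((Set.update_mem_pi_iff_of_mem hP).2 fun _ => hQ)
  linarith [pot_sub_pot_update Cr hC0 P i Q]

theorem socCost_le_mul_pot (hC0 : ∀ r, Cr r ∅ = 0) (hnn : ∀ r T, 0 ≤ Cr r T)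
    (P : Fin n → Finset R) : socCost Cr P ≤ n * pot Cr P := by
  rw [socCost, pot_eq_sum_shapleyPotential, mul_sum]
  refine sum_le_sum fun r _ => (apply_le_card_mul_shapleyPotential (hC0 r) (hnn r) _).trans ?_
  gcongr
  · exact shapleyPotential_nonneg (hnn r) _
  · exact card_users_le P r

theorem pot_le_harmonicNum_mul_socCost (hnn : ∀ r T, 0 ≤ Cr r T)
    (hmono : ∀ r (T U : Finset (Fin n)), T ⊆ U → Cr r T ≤ Cr r U) (P : Fin n → Finset R) :
    pot Cr P ≤ harmonicNum n * socCost Cr P := by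
  rw [socCost, pot_eq_sum_shapleyPotential, mul_sum]
  refine sum_le_sum fun r _ => (shapleyPotential_le_harmonicNum_mul (hmono r) _).trans ?_
  gcongr
  · exact hnn r _
  · exact harmonicNum_mono (card_users_le P r)

end Game

/-- The price of stability of Shapley cost sharing games with nondecreasing
set-dependent costs is at most `n · H_n`. -/
theorem pos_shapley_arbitrary {n : ℕ} {R : Type*} [Fintype R] [DecidableEq R]
    (Strat : Fin n → Set (Finset R)) (Cr : R → Finset (Fin n) → ℝ)
    (hC0 : ∀ r, Cr r ∅ = 0)
    (hnn : ∀ r T, 0 ≤ Cr r T)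
    (hmono : ∀ r (T U : Finset (Fin n)), T ⊆ U → Cr r T ≤ Cr r U)
    (hStrat : ∀ i, (Strat i).Nonempty) :
    ∃ P : Fin n → Finset R, isPNE Strat Cr P ∧
      ∀ Q : Fin n → Finset R, (∀ i, Q i ∈ Strat i) →
        socCost Cr P ≤ (n : ℝ) * harmonicNum n * socCost Cr Q := by
  obtain ⟨P, hP, hmin⟩ := (Set.univ.pi Strat).exists_min_image (pot Cr) (Set.toFinite _)
    (Set.univ_pi_nonempty_iff.2 hStrat)
  refine ⟨P, isPNE_of_pot_le Cr Strat hC0 hP hmin, fun Q hQ => ?_⟩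
  calc socCost Cr P ≤ n * pot Cr P := socCost_le_mul_pot Cr hC0 hnn P
    _ ≤ n * pot Cr Q := by
      gcongr
      exact hmin Q fun i _ => hQ i
    _ ≤ n * (harmonicNum n * socCost Cr Q) := by
      gcongr
      exact pot_le_harmonicNum_mul_socCost Cr hnn hmono Q
    _ = n * harmonicNum n * socCost Cr Q := (mul_assoc _ _ _).symm
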